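/- Every doubling measure $\mu$ on $\mathbb{Z}$ (with the metric $d(m,n)=|m-n|$ and positive weights $a_n = \mu(n)$) satisfies $C^0_\mu = \sup_{n} \frac{a_{n-1}+a_n+a_{n+1}}{a_n} \ge 3$. Consequently, $C_{\mathbb{Z}} = C^0_{\mathbb{Z}} = 3$. -/

import Mathlib

/-!
If `μ (n - 1) + μ n + μ (n + 1) ≤ s μ n` everywhere with `s < 3`, then
`μ (n - 1) + μ (n + 1) < 2 μ n`, so `μ` is a concave function on `ℤ`. A concave function bounded
below on all of `ℤ` must be nondecreasing (otherwise it decreases at least linearly to the right)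
and, by reflection, nonincreasing, hence constant; but then the radius-one quotient equals `3`.
The counting measure attains `3` both for `C⁰_μ` and for `C_μ`, since `#B(n, 2k+1) / #B(n, k)`
`= (4k + 3) / (2k + 1) ≤ 3`.
-/

open Finset

/-- The closed ball of center `n` and radius `k` in `ℤ` (infinite path graph). -/
noncomputable def zball (n : ℤ) (k : ℕ) : Finset ℤ := Finset.Icc (n - k) (n + k)

/-- The set of doubling quotients of a weight `μ` on `ℤ`. -/
def ratioSet (μ : ℤ → ℝ) : Set ℝ :=
  {x | ∃ (n : ℤ) (k : ℕ),
    x = (∑ i ∈ zball n (2 * k + 1), μ i) / (∑ i ∈ zball n k, μ i)}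

/-- The set of radius-one doubling quotients of a weight `μ` on `ℤ`. -/
def ratio0Set (μ : ℤ → ℝ) : Set ℝ :=
  {x | ∃ n : ℤ, x = (μ (n - 1) + μ n + μ (n + 1)) / μ n}

section Concave

variable {f : ℤ → ℝ}

lemma succ_sub_le_of_concave (hf : ∀ n, f (n - 1) + f (n + 1) ≤ 2 * f n) (n : ℤ) (k : ℕ) :
    f (n + k + 1) - f (n + k) ≤ f (n + 1) - f n := by
  induction k with
  | zero => simp
  | succ k ih =>
    have h := hf (n + k + 1)
    simp only [add_sub_cancel_right] at h
    push_cast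
    rw [← add_assoc]
    linarith

lemma le_add_mul_of_concave (hf : ∀ n, f (n - 1) + f (n + 1) ≤ 2 * f n) (n : ℤ) (k : ℕ) :
    f (n + k) ≤ f n + k * (f (n + 1) - f n) := by
  induction k with
  | zero => simp
  | succ k ih =>
    have h := succ_sub_le_of_concave hf n k
    push_cast
    rw [← add_assoc]
    linarith

lemma monotone_of_concave_of_bddBelow (hf : ∀ n, f (n - 1) + f (n + 1) ≤ 2 * f n)
    (hb : BddBelow (Set.range f)) : Monotone f := by
  refine monotone_int_of_le_succ fun n => ?_
  by_contra! hdec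
  obtain ⟨c, hc⟩ := hb
  obtain ⟨k, hk⟩ := exists_nat_gt ((f n - c) / (f n - f (n + 1)))
  rw [div_lt_iff₀ (by linarith)] at hk
  have hlin := le_add_mul_of_concave hf n k
  have hlow : c ≤ f (n + k) := hc ⟨_, rfl⟩
  linarith

lemma antitone_of_concave_of_bddBelow (hf : ∀ n, f (n - 1) + f (n + 1) ≤ 2 * f n)
    (hb : BddBelow (Set.range f)) : Antitone f := by
  have hmono : Monotone (f ∘ Neg.neg) := by
    refine monotone_of_concave_of_bddBelow (fun n => ?_) (hb.mono (Set.range_comp_subset_range _ _))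
    have h := hf (-n)
    simp only [Function.comp_apply]
    rw [show -(n - 1) = -n + 1 by ring, show -(n + 1) = -n - 1 by ring]
    linarith
  intro a b hab
  simpa using hmono (neg_le_neg hab)

end Concave

lemma three_le_of_forall_add_add_le_mul {μ : ℤ → ℝ} (hpos : ∀ n, 0 < μ n) {s : ℝ}
    (h : ∀ n, μ (n - 1) + μ n + μ (n + 1) ≤ s * μ n) : 3 ≤ s := by
  by_contra! hs
  have hconc : ∀ n, μ (n - 1) + μ (n + 1) ≤ 2 * μ n := fun n => by
    nlinarith [h n, hpos n]
  have hb : BddBelow (Set.range μ) := ⟨0, by rintro _ ⟨n, rfl⟩; exact (hpos n).le⟩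
  have hmono := monotone_of_concave_of_bddBelow hconc hb
  have hanti := antitone_of_concave_of_bddBelow hconc hb
  have h₁ : μ (0 - 1) = μ 0 := le_antisymm (hmono (by norm_num)) (hanti (by norm_num))
  have h₂ : μ (0 + 1) = μ 0 := le_antisymm (hanti (by norm_num)) (hmono (by norm_num))
  have h₀ := h 0
  rw [h₁, h₂] at h₀
  nlinarith [hpos 0]

lemma three_le_sSup_ratio0Set {μ : ℤ → ℝ} (hpos : ∀ n, 0 < μ n)
    (hbdd : BddAbove (ratio0Set μ)) : 3 ≤ sSup (ratio0Set μ) :=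
  three_le_of_forall_add_add_le_mul hpos fun n =>
    (div_le_iff₀ (hpos n)).1 (le_csSup hbdd ⟨n, rfl⟩)

lemma ratio0Set_subset_ratioSet (μ : ℤ → ℝ) : ratio0Set μ ⊆ ratioSet μ := by
  rintro x ⟨n, rfl⟩
  refine ⟨n, 0, ?_⟩
  have hball : zball n (2 * 0 + 1) = {n - 1, n, n + 1} := by
    ext i
    simp only [zball, mem_Icc, mem_insert, mem_singleton]
    omega
  rw [hball, sum_insert (by simp only [mem_insert, mem_singleton]; omega), sum_pair (by omega), zball, Nat.cast_zero, sub_zero,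
    add_zero, Icc_self, sum_singleton, add_assoc]

lemma sSup_ratio0Set_le_sSup_ratioSet (μ : ℤ → ℝ) (hbdd : BddAbove (ratioSet μ)) :
    sSup (ratio0Set μ) ≤ sSup (ratioSet μ) :=
  csSup_le_csSup hbdd ⟨_, 0, rfl⟩ (ratio0Set_subset_ratioSet μ)

lemma card_zball (n : ℤ) (k : ℕ) : ((zball n k).card : ℝ) = 2 * k + 1 := by
  rw [zball, Int.card_Icc, show n + k + 1 - (n - k) = ((2 * k + 1 : ℕ) : ℤ) by push_cast; ring,
    Int.toNat_natCast]
  push_cast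
  ring

lemma ratioSet_one_le_three : ∀ x ∈ ratioSet (fun _ => (1 : ℝ)), x ≤ 3 := by
  rintro _ ⟨n, k, rfl⟩
  simp only [sum_const, nsmul_eq_mul, mul_one, card_zball]
  rw [div_le_iff₀ (by positivity)]
  push_cast
  linarith [(Nat.cast_nonneg k : (0 : ℝ) ≤ k)]

lemma bddAbove_ratioSet_one : BddAbove (ratioSet fun _ => (1 : ℝ)) :=
  ⟨3, ratioSet_one_le_three⟩

lemma sSup_ratio0Set_one : sSup (ratio0Set fun _ => (1 : ℝ)) = 3 :=
  le_antisymm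
    (sSup_ratio0Set_le_sSup_ratioSet _ bddAbove_ratioSet_one |>.trans
      (csSup_le ⟨_, 0, 0, rfl⟩ ratioSet_one_le_three))
    (three_le_sSup_ratio0Set (fun _ => one_pos)
      (bddAbove_ratioSet_one.mono (ratio0Set_subset_ratioSet _)))

lemma sSup_ratioSet_one : sSup (ratioSet fun _ => (1 : ℝ)) = 3 :=
  le_antisymm (csSup_le ⟨_, 0, 0, rfl⟩ ratioSet_one_le_three)
    (sSup_ratio0Set_one ▸ sSup_ratio0Set_le_sSup_ratioSet _ bddAbove_ratioSet_one)

/-- Every doubling measure `μ` on `ℤ` satisfies `C⁰_μ ≥ 3`; consequently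
`C_ℤ = C⁰_ℤ = 3`. -/
theorem stmt_9 :
    (∀ μ : ℤ → ℝ, (∀ n, 0 < μ n) → BddAbove (ratioSet μ) →
      3 ≤ sSup (ratio0Set μ)) ∧
    sInf {c | ∃ μ : ℤ → ℝ, (∀ n, 0 < μ n) ∧ BddAbove (ratioSet μ) ∧
      c = sSup (ratioSet μ)} = 3 ∧
    sInf {c | ∃ μ : ℤ → ℝ, (∀ n, 0 < μ n) ∧ BddAbove (ratioSet μ) ∧
      c = sSup (ratio0Set μ)} = 3 := by
  have hC0 : ∀ μ : ℤ → ℝ, (∀ n, 0 < μ n) → BddAbove (ratioSet μ) →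
      3 ≤ sSup (ratio0Set μ) := fun μ hpos hbdd =>
    three_le_sSup_ratio0Set hpos (hbdd.mono (ratio0Set_subset_ratioSet μ))
  refine ⟨hC0, IsLeast.csInf_eq ⟨?_, ?_⟩, IsLeast.csInf_eq ⟨?_, ?_⟩⟩
  · exact ⟨_, fun _ => one_pos, bddAbove_ratioSet_one, sSup_ratioSet_one.symm⟩
  · rintro _ ⟨μ, hpos, hbdd, rfl⟩
    exact (hC0 μ hpos hbdd).trans (sSup_ratio0Set_le_sSup_ratioSet μ hbdd)
  · exact ⟨_, fun _ => one_pos, bddAbove_ratioSet_one, sSup_ratio0Set_one.symm⟩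
  · rintro _ ⟨μ, hpos, hbdd, rfl⟩
    exact hC0 μ hpos hbdd
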